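/- arXiv:2009.01644 — 2 statements merged into one kernel-verified Lean document; each statement's English description precedes it below -/
import Mathlib

section
/- If X is a real random variable with |X| ≤ c₀ almost surely and E[X] = 0, then log E[exp(λX)] ≥ (1/2)·Var[X]·λ² − c₀³|λ|³·e^{c₀|λ|} for all real λ. In particular, if Var[X] ≥ c₁ > 0, then for sufficiently small |λ|, log E[exp(λX)] ≥ (c₁/4)λ². -/
/-!
Bound `exp` from below by its second-order Taylor polynomial with a cubic error, integrate
against the law of `X` (the linear term vanishes because `X` is centred) to get
`E[exp (λX)] ≥ 1 + λ²Var[X]/2 - s³eˢ/2` with `s = c₀|λ|`, and pass to the logarithm via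
`log (1 + x) ≥ x - x²` and `E[exp (λX)] ≥ 1`; since `λ²Var[X]/2 ≤ s²/2`, the quadratic loss
`x²` is absorbed by the other half of `s³eˢ`.
-/

open MeasureTheory ProbabilityTheory Real

namespace Real

lemma quadratic_le_exp_add_abs_pow_three_mul_exp_abs (t : ℝ) :
    1 + t + t ^ 2 / 2 ≤ exp t + |t| ^ 3 * exp |t| / 2 := by
  have hcube : |t| ^ 3 ≤ |t| ^ 3 * exp |t| :=
    le_mul_of_one_le_right (by positivity) (one_le_exp (abs_nonneg t))
  have hcube_nonneg : 0 ≤ |t| ^ 3 := by positivity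
  rcases le_total 0 t with ht | ht
  · linarith [quadratic_le_exp_of_nonneg ht]
  rcases le_total |t| 1 with ht1 | ht1
  · have h := (abs_le.1 (exp_bound ht1 (n := 3) (by norm_num))).1
    norm_num [Finset.sum_range_succ, Nat.factorial] at h
    linarith
  · have hsq : t ^ 2 ≤ |t| ^ 3 := by
      rw [← sq_abs]
      nlinarith [abs_nonneg t]
    have : t ≤ -1 := by rw [abs_of_nonpos ht] at ht1; linarith
    linarith [exp_pos t]

lemma sub_pow_three_mul_exp_le_log {a s y : ℝ} (hs : 0 ≤ s) (ha : a ≤ s ^ 2 / 2) (hy : 1 ≤ y)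
    (hay : 1 + a - s ^ 3 * exp s / 2 ≤ y) : a - s ^ 3 * exp s ≤ log y := by
  set x := a - s ^ 3 * exp s / 2 with hx_def
  have hB : 0 ≤ s ^ 3 * exp s := by positivity
  rcases le_or_gt x 0 with hx | hx
  · linarith [log_nonneg hy]
  have hlog : x - x ^ 2 ≤ log y := calc
    x - x ^ 2 ≤ x / (1 + x) := by
      rw [le_div_iff₀ (by linarith)]
      nlinarith [pow_pos hx 3]
    _ = 1 - (1 + x)⁻¹ := by field_simp; ring
    _ ≤ log (1 + x) := one_sub_inv_le_log_of_pos (by linarith)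
    _ ≤ log y := log_le_log (by linarith) (by linarith)
  have hx2 : x ^ 2 ≤ s ^ 3 * exp s / 2 := calc
    x ^ 2 ≤ (s ^ 2 / 2) ^ 2 := pow_le_pow_left₀ hx.le (by linarith) 2
    _ = s ^ 3 * s / 4 := by ring
    _ ≤ s ^ 3 * exp s / 2 := by nlinarith [add_one_le_exp s, pow_nonneg hs 3]
  linarith

lemma pow_three_mul_abs_pow_three_mul_exp_le {c δ l : ℝ} (hc : 0 < c)
    (hl : |l| ≤ min 1 (δ / (c ^ 3 * exp c))) :
    c ^ 3 * |l| ^ 3 * exp (c * |l|) ≤ δ * l ^ 2 := by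
  have hexp : exp (c * |l|) ≤ exp c :=
    exp_le_exp.2 (mul_le_of_le_one_right hc.le (hl.trans (min_le_left _ _)))
  have hδl : c ^ 3 * exp c * |l| ≤ δ := by
    rw [mul_comm, ← le_div_iff₀ (by positivity)]
    exact hl.trans (min_le_right _ _)
  calc c ^ 3 * |l| ^ 3 * exp (c * |l|)
      ≤ c ^ 3 * |l| ^ 3 * exp c := by gcongr
    _ = c ^ 3 * exp c * |l| * l ^ 2 := by rw [← sq_abs l]; ring
    _ ≤ δ * l ^ 2 := by gcongr

end Real

namespace ProbabilityTheory

variable {Ω : Type*} [MeasurableSpace Ω] {μ : Measure Ω} [IsProbabilityMeasure μ] {X : Ω → ℝ}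
  {c t : ℝ}

lemma one_add_integral_le_mgf {g : Ω → ℝ} (hX : Integrable X μ) (hcen : μ[X] = 0)
    (hg : Integrable g μ) (hexp : Integrable (fun ω ↦ exp (t * X ω)) μ)
    (hle : ∀ᵐ ω ∂μ, 1 + t * X ω + g ω ≤ exp (t * X ω)) : 1 + μ[g] ≤ mgf X μ t := by
  have hlin : Integrable (fun ω ↦ 1 + t * X ω) μ := (integrable_const 1).add (hX.const_mul t)
  have hint : μ[fun ω ↦ 1 + t * X ω + g ω] = 1 + μ[g] := by
    rw [integral_add hlin hg, integral_add (integrable_const 1) (hX.const_mul t),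
      integral_const_mul, hcen]
    simp
  exact hint ▸ integral_mono_ae (hlin.add hg) hexp hle

lemma one_le_mgf_of_integral_eq_zero (hX : Integrable X μ) (hcen : μ[X] = 0)
    (hexp : Integrable (fun ω ↦ exp (t * X ω)) μ) : 1 ≤ mgf X μ t := by
  simpa using one_add_integral_le_mgf (g := 0) hX hcen (integrable_zero _ _ _) hexp
    (.of_forall fun ω ↦ by simpa [add_comm] using add_one_le_exp (t * X ω))

lemma integral_sq_le_of_abs_le (hbd : ∀ᵐ ω ∂μ, |X ω| ≤ c) : ∫ ω, X ω ^ 2 ∂μ ≤ c ^ 2 := by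
  have hle : (fun ω ↦ X ω ^ 2) ≤ᵐ[μ] fun _ ↦ c ^ 2 := by
    filter_upwards [hbd] with ω hω
    exact sq_le_sq' (abs_le.1 hω).1 (abs_le.1 hω).2
  simpa using integral_mono_of_nonneg (.of_forall fun ω ↦ sq_nonneg (X ω))
    (integrable_const _) hle

theorem integral_sq_mul_sq_sub_le_cgf (hXm : AEMeasurable X μ) (hbd : ∀ᵐ ω ∂μ, |X ω| ≤ c)
    (hcen : μ[X] = 0) (t : ℝ) :
    1 / 2 * (∫ ω, X ω ^ 2 ∂μ) * t ^ 2 - c ^ 3 * |t| ^ 3 * exp (c * |t|) ≤ cgf X μ t := by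
  obtain ⟨ω₀, hω₀⟩ := hbd.exists
  have hc : 0 ≤ c := (abs_nonneg _).trans hω₀
  have hX : Integrable X μ := .of_bound hXm.aestronglyMeasurable c (by simpa using hbd)
  have hX2 : Integrable (fun ω ↦ X ω ^ 2) μ :=
    .of_bound (hXm.pow_const 2).aestronglyMeasurable (c ^ 2) <| by
      filter_upwards [hbd] with ω hω
      simpa using pow_le_pow_left₀ (abs_nonneg _) hω 2
  have hexp : Integrable (fun ω ↦ exp (t * X ω)) μ :=
    integrable_exp_mul_of_mem_Icc hXm (hbd.mono fun ω hω ↦ abs_le.1 hω)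
  set V := ∫ ω, X ω ^ 2 ∂μ
  set s := c * |t| with hs
  have hlow : 1 + t ^ 2 / 2 * V - s ^ 3 * exp s / 2 ≤ mgf X μ t := by
    have h := one_add_integral_le_mgf (g := fun ω ↦ t ^ 2 / 2 * X ω ^ 2 - s ^ 3 * exp s / 2)
      hX hcen ((hX2.const_mul _).sub (integrable_const _)) hexp <| by
        filter_upwards [hbd] with ω hω
        have hts : |t * X ω| ≤ s := by rw [abs_mul, hs, mul_comm c]; gcongr
        have hcube : |t * X ω| ^ 3 * exp |t * X ω| ≤ s ^ 3 * exp s := by gcongr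
        have := quadratic_le_exp_add_abs_pow_three_mul_exp_abs (t * X ω)
        linarith [mul_pow t (X ω) 2]
    rwa [integral_sub (hX2.const_mul _) (integrable_const _), integral_const_mul,
      integral_const, probReal_univ, one_smul, ← add_sub_assoc] at h
  have hV : t ^ 2 / 2 * V ≤ s ^ 2 / 2 := by
    rw [hs, mul_pow, sq_abs]
    nlinarith [integral_sq_le_of_abs_le hbd, sq_nonneg t]
  calc 1 / 2 * V * t ^ 2 - c ^ 3 * |t| ^ 3 * exp (c * |t|)
      = t ^ 2 / 2 * V - s ^ 3 * exp s := by ring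
    _ ≤ cgf X μ t := sub_pow_three_mul_exp_le_log (by positivity) hV
        (one_le_mgf_of_integral_eq_zero hX hcen hexp) hlow

end ProbabilityTheory

theorem log_mgf_lower_bound
    {Ω : Type*} [MeasurableSpace Ω] (μ : Measure Ω) [IsProbabilityMeasure μ]
    (X : Ω → ℝ) (hX : Measurable X) (c₀ c₁ : ℝ) (hc₀ : 0 < c₀) (hc₁ : 0 < c₁)
    (hbd : ∀ᵐ ω ∂μ, |X ω| ≤ c₀) (hcen : ∫ ω, X ω ∂μ = 0)
    (hvar : c₁ ≤ ∫ ω, (X ω) ^ 2 ∂μ) :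
    (∀ l : ℝ, Real.log (∫ ω, Real.exp (l * X ω) ∂μ) ≥
        (1 / 2) * (∫ ω, (X ω) ^ 2 ∂μ) * l ^ 2
          - c₀ ^ 3 * |l| ^ 3 * Real.exp (c₀ * |l|)) ∧
    (∃ ε > 0, ∀ l : ℝ, |l| ≤ ε →
        Real.log (∫ ω, Real.exp (l * X ω) ∂μ) ≥ (c₁ / 4) * l ^ 2) := by
  have hmain := integral_sq_mul_sq_sub_le_cgf hX.aemeasurable hbd hcen
  refine ⟨hmain, min 1 (c₁ / 4 / (c₀ ^ 3 * exp c₀)), lt_min one_pos (by positivity),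
    fun l hl ↦ ?_⟩
  have hcube := pow_three_mul_abs_pow_three_mul_exp_le hc₀ hl
  have hquad : c₁ * l ^ 2 ≤ (∫ ω, X ω ^ 2 ∂μ) * l ^ 2 := by gcongr
  show c₁ / 4 * l ^ 2 ≤ cgf X μ l
  linarith [hmain l]
end

section
/- Suppose ℓ₁, ℓ₂ ∈ [0,∞] satisfy ℓ₁·I⁽¹⁾(x) = ℓ₂·I⁽²⁾(x) for all x ∈ (0,1], where I⁽¹⁾, I⁽²⁾ are the rate functions of symmetric ±1 and ±2 Bernoulli variables. Then (ℓ₁,ℓ₂) = (0,0) or (ℓ₁,ℓ₂) = (∞,∞). -/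
open Real ENNReal

theorem proportional_rate_functions_degenerate
    (I₁ I₂ : ℝ → ℝ)
    (hI₁ : ∀ x, I₁ x = Real.log 2 + ((x + 1) / 2) * Real.log ((x + 1) / 2)
        + ((1 - x) / 2) * Real.log ((1 - x) / 2))
    (hI₂ : ∀ x, I₂ x = Real.log 2 + ((x + 2) / 4) * Real.log ((x + 2) / 4)
        + ((2 - x) / 4) * Real.log ((2 - x) / 4))
    (l₁ l₂ : ℝ≥0∞)
    (h : ∀ x ∈ Set.Ioc (0:ℝ) 1,
      l₁ * ENNReal.ofReal (I₁ x) = l₂ * ENNReal.ofReal (I₂ x)) :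
    (l₁ = 0 ∧ l₂ = 0) ∨ (l₁ = ⊤ ∧ l₂ = ⊤) := by
  have ha : (0:ℝ) < Real.log 2 := Real.log_pos (by norm_num)
  set a := Real.log 2 with ha'
  set b := Real.log 3 with hb'
  set c := Real.log 5 with hc'
  -- power bounds
  have hba1 : 84 * a < 53 * b := by
    have h0 : (2:ℝ)^(84:ℕ) < 3^(53:ℕ) := by norm_num
    have h1 := Real.log_lt_log (by positivity) h0
    rw [Real.log_pow, Real.log_pow] at h1
    push_cast at h1; linarith
  have hba2 : 41 * b < 65 * a := by
    have h0 : (3:ℝ)^(41:ℕ) < 2^(65:ℕ) := by norm_num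
    have h1 := Real.log_lt_log (by positivity) h0
    rw [Real.log_pow, Real.log_pow] at h1
    push_cast at h1; linarith
  have hca1 : 65 * a < 28 * c := by
    have h0 : (2:ℝ)^(65:ℕ) < 5^(28:ℕ) := by norm_num
    have h1 := Real.log_lt_log (by positivity) h0
    rw [Real.log_pow, Real.log_pow] at h1
    push_cast at h1; linarith
  have hbpos : 0 < b := by linarith
  -- log identities
  have l34 : Real.log (3/4) = b - 2*a := by
    rw [show (3/4:ℝ) = 3 / 2^2 by norm_num, Real.log_div (by norm_num) (by norm_num),
      Real.log_pow]
    push_cast; ring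
  have l14 : Real.log (1/4) = -(2*a) := by
    rw [show (1/4:ℝ) = ((2:ℝ)^2)⁻¹ by norm_num, Real.log_inv, Real.log_pow]
    push_cast; ring
  have l58 : Real.log (5/8) = c - 3*a := by
    rw [show (5/8:ℝ) = 5 / 2^3 by norm_num, Real.log_div (by norm_num) (by norm_num),
      Real.log_pow]
    push_cast; ring
  have l38 : Real.log (3/8) = b - 3*a := by
    rw [show (3/8:ℝ) = 3 / 2^3 by norm_num, Real.log_div (by norm_num) (by norm_num),
      Real.log_pow]
    push_cast; ring
  -- values
  have e11 : I₁ 1 = a := by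
    rw [hI₁]; norm_num
  have e21 : I₂ 1 = 3/4*b - a := by
    have q1 : ((1:ℝ)+2)/4 = 3/4 := by norm_num
    have q2 : ((2:ℝ)-1)/4 = 1/4 := by norm_num
    rw [hI₂, q1, q2, l34, l14]; ring
  have e12 : I₁ (1/2) = 3/4*b - a := by
    have q1 : ((1/2:ℝ)+1)/2 = 3/4 := by norm_num
    have q2 : ((1:ℝ)-1/2)/2 = 1/4 := by norm_num
    rw [hI₁, q1, q2, l34, l14]; ring
  have e22 : I₂ (1/2) = 5/8*c + 3/8*b - 2*a := by
    have q1 : ((1/2:ℝ)+2)/4 = 5/8 := by norm_num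
    have q2 : ((2:ℝ)-1/2)/4 = 3/8 := by norm_num
    rw [hI₂, q1, q2, l58, l38]; ring
  have p1 : 0 < I₁ 1 := by rw [e11]; exact ha
  have p2 : 0 < I₂ 1 := by rw [e21]; linarith
  have p3 : 0 < I₁ (1/2) := by rw [e12]; linarith
  have p4 : 0 < I₂ (1/2) := by rw [e22]; linarith
  have h1 := h 1 (by constructor <;> norm_num)
  have h2 := h (1/2) (by constructor <;> norm_num)
  have hA0 : ENNReal.ofReal (I₁ 1) ≠ 0 := by
    simp only [ne_eq, ENNReal.ofReal_eq_zero, not_le]; exact p1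
  have hB0 : ENNReal.ofReal (I₂ 1) ≠ 0 := by
    simp only [ne_eq, ENNReal.ofReal_eq_zero, not_le]; exact p2
  rcases eq_or_ne l₁ 0 with rfl | hl₁0
  · left
    refine ⟨rfl, ?_⟩
    rw [zero_mul] at h1
    rcases mul_eq_zero.mp h1.symm with h' | h'
    · exact h'
    · exact absurd h' hB0
  rcases eq_or_ne l₁ ⊤ with rfl | hl₁t
  · right
    refine ⟨rfl, ?_⟩
    rw [ENNReal.top_mul hA0] at h1
    by_contra hl₂t
    exact (ENNReal.mul_ne_top hl₂t ENNReal.ofReal_ne_top) h1.symm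
  exfalso
  have hl₂0 : l₂ ≠ 0 := by
    rintro rfl
    rw [zero_mul] at h1
    rcases mul_eq_zero.mp h1 with h' | h'
    · exact hl₁0 h'
    · exact hA0 h'
  have hl₂t : l₂ ≠ ⊤ := by
    rintro rfl
    rw [ENNReal.top_mul hB0] at h1
    exact (ENNReal.mul_ne_top hl₁t ENNReal.ofReal_ne_top) h1
  have hmul : (l₁ * l₂) * (ENNReal.ofReal (I₁ 1) * ENNReal.ofReal (I₂ (1/2)))
      = (l₁ * l₂) * (ENNReal.ofReal (I₂ 1) * ENNReal.ofReal (I₁ (1/2))) := by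
    calc (l₁ * l₂) * (ENNReal.ofReal (I₁ 1) * ENNReal.ofReal (I₂ (1/2)))
        = (l₁ * ENNReal.ofReal (I₁ 1)) * (l₂ * ENNReal.ofReal (I₂ (1/2))) := by ring
      _ = (l₂ * ENNReal.ofReal (I₂ 1)) * (l₁ * ENNReal.ofReal (I₁ (1/2))) := by rw [h1, h2]
      _ = (l₁ * l₂) * (ENNReal.ofReal (I₂ 1) * ENNReal.ofReal (I₁ (1/2))) := by ring
  have key : ENNReal.ofReal (I₁ 1) * ENNReal.ofReal (I₂ (1/2))
      = ENNReal.ofReal (I₂ 1) * ENNReal.ofReal (I₁ (1/2)) :=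
    (ENNReal.mul_right_inj (mul_ne_zero hl₁0 hl₂0) (ENNReal.mul_ne_top hl₁t hl₂t)).mp hmul
  rw [← ENNReal.ofReal_mul p1.le, ← ENNReal.ofReal_mul p2.le,
    ENNReal.ofReal_eq_ofReal_iff (by positivity) (by positivity)] at key
  rw [e11, e21, e12, e22] at key
  nlinarith [mul_pos ha (show (0:ℝ) < 28*c - 65*a by linarith),
    mul_pos ha (show (0:ℝ) < 53*b - 84*a by linarith),
    mul_pos hbpos (show (0:ℝ) < 65*a - 41*b by linarith),
    mul_pos ha (show (0:ℝ) < 65*a - 41*b by linarith)]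
end
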